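/- arXiv:2002.12136 — 3 statements merged into one kernel-verified Lean document; each statement's English description precedes it below -/
import Mathlib

section
/- Suppose z, v, w, x, y are Gaussian integers with v \ne 0 such that 4*(2*v*(2*(2z+1)^2+1) - y)^2 - 3*y^2 - 1 = 0 and w^2 - 1 - 3*y^2*(2z+1 - x*y)^2 = 0. Then z is a rational integer. -/
/-!
Both hypotheses are Pell equations `X² - 3Y² = 1` over `ℤ[i]`, with `ζ = 2z + 1`,
`(X, Y) = (2(2v(2ζ² + 1) - y), y)` and `(X, Y) = (w, y(ζ - xy))`. Their solutions are rational
integers: unless `Y = 0`, multiplying `X + Y√3` by one of the units `2 ± √3` strictly decreases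
the norm of `Y`, and the transformation preserves reality in both directions. Hence `y = m` is a
nonzero integer and `ζ - xy` is real, so `Im ζ = m Im x`; on the other hand the first equation
forces `N(2ζ² + 1) ≤ m²`. If `Im ζ ≠ 0`, then `N(2ζ² + 1) > (Im ζ)² ≥ m²`, a contradiction.
-/

namespace GaussianInt

lemma norm_eq_sq_add_sq (x : GaussianInt) : x.norm = x.re ^ 2 + x.im ^ 2 := by
  rw [Zsqrtd.norm_def]; ring

lemma norm_sub_add_norm_add (x y : GaussianInt) :
    (x - y).norm + (x + y).norm = 2 * x.norm + 2 * y.norm := by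
  simp only [norm_eq_sq_add_sq, Zsqrtd.re_sub, Zsqrtd.im_sub, Zsqrtd.re_add, Zsqrtd.im_add]
  ring

lemma norm_sq_sub_one_le (y : GaussianInt) : (y ^ 2 - 1).norm ≤ (y.norm + 1) ^ 2 := by
  simp only [norm_eq_sq_add_sq, sq, Zsqrtd.re_sub, Zsqrtd.im_sub, Zsqrtd.re_mul, Zsqrtd.im_mul,
    Zsqrtd.re_one, Zsqrtd.im_one]
  nlinarith [sq_nonneg y.re]

lemma sq_three_mul_norm_sub_one_le_norm_one_add_three_mul_sq (y : GaussianInt) :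
    (3 * y.norm - 1) ^ 2 ≤ (1 + 3 * y ^ 2).norm := by
  simp only [norm_eq_sq_add_sq, sq, Zsqrtd.re_add, Zsqrtd.im_add, Zsqrtd.re_mul, Zsqrtd.im_mul,
    Zsqrtd.re_one, Zsqrtd.im_one, Zsqrtd.re_ofNat, Zsqrtd.im_ofNat, Nat.cast_ofNat]
  ring_nf
  nlinarith [sq_nonneg y.re]

/-- The product of the norms of `2Y ∓ X` is `N(Y² - 1) ≤ (N Y + 1)²`, while their sum is
`8 N Y + 2 N X ≥ 14 N Y - 2`; so both cannot be `≥ N Y`. -/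
lemma exists_norm_lt_of_sq_sub_three_mul_sq_eq_one {X Y : GaussianInt}
    (h : X ^ 2 - 3 * Y ^ 2 = 1) (hY : Y ≠ 0) :
    ∃ s : GaussianInt, (s = 1 ∨ s = -1) ∧ (2 * Y - s * X).norm < Y.norm := by
  have hprod : (2 * Y - X).norm * (2 * Y + X).norm = (Y ^ 2 - 1).norm := by
    rw [← Zsqrtd.norm_mul]; congr 1; linear_combination (-1 : GaussianInt) * h
  have hsum := norm_sub_add_norm_add (2 * Y) X
  have h2Y : (2 * Y).norm = 4 * Y.norm := by
    rw [Zsqrtd.norm_mul]; simp [Zsqrtd.norm_def]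
  have hX : 3 * Y.norm - 1 ≤ X.norm := by
    have hXX : X.norm ^ 2 = (1 + 3 * Y ^ 2).norm := by
      rw [sq, ← Zsqrtd.norm_mul]; congr 1; linear_combination h
    refine (le_abs_self _).trans (abs_le_of_sq_le_sq ?_ (norm_nonneg X))
    exact hXX ▸ sq_three_mul_norm_sub_one_le_norm_one_add_three_mul_sq Y
  have hN : 0 < Y.norm := norm_pos.2 hY
  by_contra! hcon
  have h1 := hcon 1 (Or.inl rfl)
  have h2 := hcon (-1) (Or.inr rfl)
  rw [one_mul] at h1
  rw [neg_one_mul, sub_neg_eq_add] at h2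
  nlinarith [mul_nonneg (sub_nonneg.2 h1) (sub_nonneg.2 h2), norm_sq_sub_one_le Y,
    mul_le_mul_of_nonneg_left hX hN.le]

theorem im_eq_zero_of_sq_sub_three_mul_sq_eq_one {X Y : GaussianInt}
    (h : X ^ 2 - 3 * Y ^ 2 = 1) : X.im = 0 ∧ Y.im = 0 := by
  induction hn : Y.norm.toNat using Nat.strong_induction_on generalizing X Y with
  | _ n ih =>
  rcases eq_or_ne Y 0 with rfl | hY
  · rcases sq_eq_one_iff.1 (by linear_combination h : X ^ 2 = 1) with rfl | rfl <;> simp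
  obtain ⟨s, hs, hlt⟩ := exists_norm_lt_of_sq_sub_three_mul_sq_eq_one h hY
  have hs2 : s ^ 2 = 1 := by rcases hs with rfl | rfl <;> norm_num
  have hsim : s.im = 0 := by rcases hs with rfl | rfl <;> rfl
  -- `X' + Y'√3 = (2 - s√3)(X + Y√3)`
  set X' := 2 * X - 3 * s * Y
  set Y' := 2 * Y - s * X
  obtain ⟨hX'im, hY'im⟩ := ih Y'.norm.toNat (by have := norm_nonneg Y'; omega) (X := X')
    (Y := Y') (by linear_combination h + (9 * Y ^ 2 - 3 * X ^ 2) * hs2) rfl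
  have hX : X = 2 * X' + 3 * s * Y' := by linear_combination (3 * X) * hs2
  have hY : Y = 2 * Y' + s * X' := by linear_combination (3 * Y) * hs2
  rw [hX, hY]
  simp [Zsqrtd.im_mul, hsim, hX'im, hY'im]

lemma sq_im_lt_norm_two_mul_sq_add_one {ζ : GaussianInt} (hre : ζ.re ≠ 0) (him : ζ.im ≠ 0) :
    ζ.im ^ 2 < (2 * ζ ^ 2 + 1).norm := by
  have hre1 : 1 ≤ ζ.re ^ 2 := by have := sq_pos_of_ne_zero hre; omega
  have him1 : 0 < ζ.im ^ 2 := sq_pos_of_ne_zero him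
  simp only [norm_eq_sq_add_sq, sq, Zsqrtd.re_add, Zsqrtd.im_add, Zsqrtd.re_mul, Zsqrtd.im_mul,
    Zsqrtd.re_one, Zsqrtd.im_one, Zsqrtd.re_ofNat, Zsqrtd.im_ofNat, Nat.cast_ofNat]
  ring_nf
  nlinarith [sq_nonneg (2 * (ζ.re * ζ.re - ζ.im * ζ.im) + 1),
    mul_le_mul_of_nonneg_right hre1 him1.le]

lemma norm_le_sq_of_add_eq_two_mul {t m : ℤ} {v P : GaussianInt}
    (hpell : 4 * t ^ 2 - 3 * m ^ 2 = 1) (hv : v ≠ 0)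
    (h : ((t + m : ℤ) : GaussianInt) = 2 * v * P) : P.norm ≤ m ^ 2 := by
  have hnorm := congrArg Zsqrtd.norm h
  rw [Zsqrtd.norm_intCast, Zsqrtd.norm_mul, Zsqrtd.norm_mul,
    show Zsqrtd.norm (2 : GaussianInt) = 4 from rfl] at hnorm
  have hv1 : 1 ≤ v.norm := norm_pos.2 hv
  nlinarith [sq_nonneg (t - m), mul_le_mul_of_nonneg_right hv1 (norm_nonneg P)]

lemma im_eq_zero_of_norm_two_mul_sq_add_one_le {ζ : GaussianInt} {k m : ℤ} (hre : ζ.re ≠ 0)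
    (him : ζ.im = k * m) (h : (2 * ζ ^ 2 + 1).norm ≤ m ^ 2) : ζ.im = 0 := by
  by_contra him0
  have hk : k ≠ 0 := by rintro rfl; simp [him] at him0
  have hm : m ^ 2 ≤ ζ.im ^ 2 := by
    rw [him, mul_pow]
    nlinarith [sq_pos_of_ne_zero hk, sq_nonneg m]
  linarith [sq_im_lt_norm_two_mul_sq_add_one hre him0]

end GaussianInt

theorem stmt_8 (z v w x y : GaussianInt) (hv : v ≠ 0)
    (h1 : 4*(2*v*(2*(2*z+1)^2+1) - y)^2 - 3*y^2 - 1 = 0)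
    (h2 : w^2 - 1 - 3*y^2*(2*z+1 - x*y)^2 = 0) :
    z.im = 0 := by
  set ζ := 2 * z + 1 with hζ
  set T := 2 * v * (2 * ζ ^ 2 + 1) - y with hT
  obtain ⟨hTim, hyim⟩ := GaussianInt.im_eq_zero_of_sq_sub_three_mul_sq_eq_one (X := 2 * T)
    (Y := y) (by linear_combination h1)
  obtain ⟨-, hprodim⟩ := GaussianInt.im_eq_zero_of_sq_sub_three_mul_sq_eq_one (X := w)
    (Y := y * (ζ - x * y)) (by linear_combination h2)
  obtain ⟨t, hTt⟩ : ∃ t : ℤ, T = t := ⟨T.re, Zsqrtd.ext rfl (by simpa using hTim)⟩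
  obtain ⟨m, rfl⟩ : ∃ m : ℤ, y = m := ⟨y.re, Zsqrtd.ext rfl hyim⟩
  have hpell : 4 * t ^ 2 - 3 * m ^ 2 = 1 := by
    have : ((4 * t ^ 2 - 3 * m ^ 2 - 1 : ℤ) : GaussianInt) = 0 := by
      push_cast; rw [← hTt]; exact h1
    linear_combination (Int.cast_eq_zero.1 this)
  have hm : m ≠ 0 := by
    rintro rfl
    have h4 : (4 : ℤ) ∣ 1 := ⟨t ^ 2, by linarith⟩
    norm_num at h4
  have hζim : ζ.im = x.im * m := by simpa [hm, sub_eq_zero] using hprodim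
  have hbound := GaussianInt.norm_le_sq_of_add_eq_two_mul hpell hv (P := 2 * ζ ^ 2 + 1)
    (by push_cast; rw [← hTt, hT]; ring)
  have hζre : ζ.re = 2 * z.re + 1 := by simp [hζ]
  have hζim' : ζ.im = 2 * z.im := by simp [hζ]
  have := GaussianInt.im_eq_zero_of_norm_two_mul_sq_add_one_le (by omega) hζim hbound
  omega
end

section
/- Let u_n = u_n(4,1) and let k be an odd positive integer. Then for every positive integer n, u_n divides u_{kn}, and the quotient u_{kn}/u_n is congruent to k modulo u_n. -/
/-!
Reading `u = lucasU A B` modulo `u n`, the addition formula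
`u (m + n) = u m * u (n + 1) + u (m + 1) * u n - A * u m * u n` gives, by induction on `j`,
`u (j * n + 1) ≡ u (n + 1) ^ j` and `u ((j + 1) * n) = u n * c` with
`c ≡ (j + 1) * u (n + 1) ^ j`.
For `B = 1` the Cassini-type identity gives `u (n + 1) ^ 2 ≡ 1 [ZMOD u n]`, so for odd `k = j + 1`
the quotient `c` is congruent to `k`.
-/

def lucasU (A B : ℤ) : ℕ → ℤ
  | 0 => 0
  | 1 => 1
  | (n+2) => A * lucasU A B (n+1) - B * lucasU A B n

namespace lucasU

variable (A B : ℤ)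

@[simp] lemma zero : lucasU A B 0 = 0 := rfl

@[simp] lemma one : lucasU A B 1 = 1 := rfl

lemma add_two (n : ℕ) : lucasU A B (n + 2) = A * lucasU A B (n + 1) - B * lucasU A B n := rfl

lemma add : ∀ m n : ℕ, lucasU A B (m + n) =
    lucasU A B m * lucasU A B (n + 1) + lucasU A B (m + 1) * lucasU A B n
      - A * lucasU A B m * lucasU A B n
  | m, 0 => by simp
  | m, 1 => by simp [add_two]; ring
  | m, n + 2 => by
    have ih₀ := add m n
    have ih₁ := add m (n + 1)
    have h₀ : lucasU A B (m + (n + 2)) = A * lucasU A B (m + n + 1) - B * lucasU A B (m + n) :=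
      add_two A B (m + n)
    have h₁ : lucasU A B (n + 2 + 1) = A * lucasU A B (n + 2) - B * lucasU A B (n + 1) :=
      add_two A B (n + 1)
    have h₂ := add_two A B n
    rw [← add_assoc] at ih₁
    linear_combination h₀ + A * ih₁ - B * ih₀ - lucasU A B m * h₁
      + (A * lucasU A B m - lucasU A B (m + 1)) * h₂

lemma self_dvd_mul (n j : ℕ) : lucasU A B n ∣ lucasU A B (j * n) := by
  induction j with
  | zero => simp
  | succ j ih =>
    rw [Nat.succ_mul, add]
    exact dvd_sub (dvd_add (ih.mul_right _) (dvd_mul_left _ _)) ((ih.mul_left _).mul_right _)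

lemma mul_add_one_modEq (n j : ℕ) :
    lucasU A B (j * n + 1) ≡ lucasU A B (n + 1) ^ j [ZMOD lucasU A B n] := by
  induction j with
  | zero => simp [Int.ModEq.refl]
  | succ j ih =>
    obtain ⟨c, hc⟩ := self_dvd_mul A B n j
    have hstep : lucasU A B ((j + 1) * n + 1) =
        lucasU A B (j * n + 1) * lucasU A B (n + 1)
          + lucasU A B n * (c * lucasU A B (n + 2) - A * c * lucasU A B (n + 1)) := by
      rw [Nat.succ_mul, add_assoc, add, hc]
      ring
    rw [hstep, pow_succ]
    exact (Int.add_mul_emod_self_left _ _ _).trans (ih.mul_right _)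

lemma exists_succ_mul_eq_mul_modEq (n j : ℕ) :
    ∃ c, lucasU A B ((j + 1) * n) = lucasU A B n * c ∧
      c ≡ (j + 1) * lucasU A B (n + 1) ^ j [ZMOD lucasU A B n] := by
  induction j with
  | zero => exact ⟨1, by simp, by simp [Int.ModEq.refl]⟩
  | succ j ih =>
    obtain ⟨c, hc, hcmod⟩ := ih
    refine ⟨c * lucasU A B (n + 1) + lucasU A B ((j + 1) * n + 1) + lucasU A B n * (-A * c),
      ?_, ?_⟩
    · rw [Nat.succ_mul (j + 1), add, hc]
      ring
    · calc _ ≡ c * lucasU A B (n + 1) + lucasU A B ((j + 1) * n + 1) [ZMOD lucasU A B n] :=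
            Int.add_mul_emod_self_left _ _ _
        _ ≡ (j + 1) * lucasU A B (n + 1) ^ j * lucasU A B (n + 1) + lucasU A B (n + 1) ^ (j + 1)
            [ZMOD lucasU A B n] := (hcmod.mul_right _).add (mul_add_one_modEq A B n (j + 1))
        _ = ((j + 1 : ℕ) + 1) * lucasU A B (n + 1) ^ (j + 1) := by push_cast; ring

lemma succ_sq_sub_mul_add_mul_sq (n : ℕ) :
    lucasU A B (n + 1) ^ 2 - A * lucasU A B (n + 1) * lucasU A B n + B * lucasU A B n ^ 2
      = B ^ n := by
  induction n with
  | zero => simp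
  | succ n ih =>
    rw [add_two, pow_succ]
    linear_combination B * ih

lemma succ_sq_modEq (n : ℕ) : lucasU A B (n + 1) ^ 2 ≡ B ^ n [ZMOD lucasU A B n] := by
  refine Int.modEq_iff_dvd.mpr ⟨B * lucasU A B n - A * lucasU A B (n + 1), ?_⟩
  linear_combination (succ_sq_sub_mul_add_mul_sq A B n).symm

variable {A} in
lemma nonneg_and_lt_succ (hA : 2 ≤ A) (n : ℕ) :
    0 ≤ lucasU A 1 n ∧ lucasU A 1 n < lucasU A 1 (n + 1) := by
  induction n with
  | zero => simp
  | succ n ih =>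
    obtain ⟨h₀, h₁⟩ := ih
    rw [add_two]
    constructor <;> nlinarith

variable {A} in
lemma pos (hA : 2 ≤ A) {n : ℕ} (hn : 0 < n) : 0 < lucasU A 1 n := by
  obtain ⟨m, rfl⟩ : ∃ m, n = m + 1 := ⟨n - 1, by omega⟩
  exact (nonneg_and_lt_succ hA m).1.trans_lt (nonneg_and_lt_succ hA m).2

end lucasU

theorem stmt_12_general (k : ℕ) (hk : Odd k) (n : ℕ) (hn : 0 < n) :
    lucasU 4 1 n ∣ lucasU 4 1 (k*n) ∧
      lucasU 4 1 (k*n) / lucasU 4 1 n ≡ (k : ℤ) [ZMOD lucasU 4 1 n] := by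
  obtain ⟨t, rfl⟩ := hk
  obtain ⟨c, hc, hcmod⟩ := lucasU.exists_succ_mul_eq_mul_modEq 4 1 n (2 * t)
  refine ⟨⟨c, hc⟩, ?_⟩
  rw [hc, Int.mul_ediv_cancel_left _ (lucasU.pos (by norm_num) hn).ne']
  have hsq : lucasU 4 1 (n + 1) ^ (2 * t) ≡ 1 [ZMOD lucasU 4 1 n] := by
    simpa [pow_mul] using (lucasU.succ_sq_modEq 4 1 n).pow t
  simpa using hcmod.trans (hsq.mul_left _)

theorem stmt_12 (k : ℕ) (hk : Odd k) (hk0 : 0 < k) (n : ℕ) (hn : 0 < n) :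
    lucasU 4 1 n ∣ lucasU 4 1 (k*n) ∧
      lucasU 4 1 (k*n) / lucasU 4 1 n ≡ (k : ℤ) [ZMOD lucasU 4 1 n] :=
  stmt_12_general k hk n hn
end

section
/- Let u_n = u_n(4,1), let z be a rational integer, and let k = |2z+1|. Suppose n is a natural number with 4*(2k^2+1) dividing u_{n+1}, and write u_{n+1} = 4*(2k^2+1)*v, y = u_n. Then 4*(2*v*(2k^2+1) - y)^2 = 3*y^2 + 1. -/
lemma lucasU_succ_succ (A B : ℤ) (n : ℕ) :
    lucasU A B (n + 2) = A * lucasU A B (n + 1) - B * lucasU A B n := rfl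

lemma lucasU_cassini (A B : ℤ) (n : ℕ) :
    lucasU A B (n + 1) ^ 2 - A * lucasU A B (n + 1) * lucasU A B n + B * lucasU A B n ^ 2
      = B ^ n := by
  induction n with
  | zero => simp [lucasU]
  | succ m ih =>
    rw [lucasU_succ_succ, pow_succ]
    linear_combination B * ih

lemma lucasU_four_one_pell (n : ℕ) :
    (lucasU 4 1 (n + 1) - 2 * lucasU 4 1 n) ^ 2 = 3 * lucasU 4 1 n ^ 2 + 1 := by
  linear_combination lucasU_cassini 4 1 n

theorem stmt_19_general (k v y : ℤ) (n : ℕ)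
    (hv : lucasU 4 1 (n+1) = 4*(2*k^2+1)*v)
    (hy : y = lucasU 4 1 n) :
    4*(2*v*(2*k^2+1) - y)^2 = 3*y^2 + 1 := by
  have hpell := lucasU_four_one_pell n
  rw [hv, ← hy] at hpell
  linear_combination hpell

theorem stmt_19 (z k v y : ℤ) (n : ℕ)
    (hk : k = |2*z + 1|)
    (hv : lucasU 4 1 (n+1) = 4*(2*k^2+1)*v)
    (hy : y = lucasU 4 1 n) :
    4*(2*v*(2*k^2+1) - y)^2 = 3*y^2 + 1 :=
  stmt_19_general k v y n hv hy
end
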